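/- For the (3,2)-QRAC, the trace correlation identity Tr[P' · ρ'_{x₁,x₂,x₃}] = (1/√6)(−1)^{x_i} holds for each i, where (P'₁,P'₂,P'₃) = (X',Y',Z'), for all eight triples (x₁,x₂,x₃) ∈ {0,1}³. -/
import Mathlib


open Matrix Kronecker

noncomputable def PX : Matrix (Fin 2) (Fin 2) ℂ := !![0, 1; 1, 0]
noncomputable def PY : Matrix (Fin 2) (Fin 2) ℂ := !![0, -Complex.I; Complex.I, 0]
noncomputable def PZ : Matrix (Fin 2) (Fin 2) ℂ := !![1, 0; 0, -1]
noncomputable def I2 : Matrix (Fin 2) (Fin 2) ℂ := 1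

noncomputable def sgn (b : Bool) : ℂ := if b then -1 else 1

noncomputable def Xp : Matrix (Fin 2 × Fin 2) (Fin 2 × Fin 2) ℂ :=
  ((1 : ℂ)/(Real.sqrt 6 : ℂ)) •
    (((1 : ℂ)/2) • (PX ⊗ₖ PX) + ((1 : ℂ)/2) • (PX ⊗ₖ PZ) + PZ ⊗ₖ I2)
noncomputable def Yp : Matrix (Fin 2 × Fin 2) (Fin 2 × Fin 2) ℂ :=
  ((1 : ℂ)/(Real.sqrt 6 : ℂ)) •
    (((1 : ℂ)/2) • (I2 ⊗ₖ PX) + I2 ⊗ₖ PZ + ((1 : ℂ)/2) • (PY ⊗ₖ PY))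
noncomputable def Zp : Matrix (Fin 2 × Fin 2) (Fin 2 × Fin 2) ℂ :=
  ((1 : ℂ)/(Real.sqrt 6 : ℂ)) •
    (PZ ⊗ₖ PZ - ((1 : ℂ)/2) • (PX ⊗ₖ I2) - ((1 : ℂ)/2) • (PZ ⊗ₖ PX))

noncomputable def rho32 (x₁ x₂ x₃ : Bool) : Matrix (Fin 2 × Fin 2) (Fin 2 × Fin 2) ℂ :=
  if (Bool.xor x₁ (Bool.xor x₂ x₃)) = false then
    ((1 : ℂ)/4) • (I2 ⊗ₖ I2) + ((1 : ℂ)/4) •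
      (sgn x₁ • (PZ ⊗ₖ I2) + sgn x₂ • (I2 ⊗ₖ PZ) + sgn x₃ • (PZ ⊗ₖ PZ))
  else
    ((1 : ℂ)/4) • (I2 ⊗ₖ I2)
    + sgn x₁ • (((1 : ℂ)/12) • (PZ ⊗ₖ I2) + ((1 : ℂ)/6) • (PX ⊗ₖ PX) + ((1 : ℂ)/6) • (PX ⊗ₖ PZ))
    + sgn x₂ • (((1 : ℂ)/6) • (I2 ⊗ₖ PX) + ((1 : ℂ)/12) • (I2 ⊗ₖ PZ) + ((1 : ℂ)/6) • (PY ⊗ₖ PY))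
    + sgn x₃ • (((1 : ℂ)/12) • (PZ ⊗ₖ PZ) - ((1 : ℂ)/6) • (PX ⊗ₖ I2) - ((1 : ℂ)/6) • (PZ ⊗ₖ PX))

lemma tr_I2_I2 : (I2 * I2).trace = 2 := by
  norm_num [I2, PX, PY, PZ, Matrix.trace, Matrix.mul_apply, Fin.sum_univ_two,
    Matrix.one_apply, Complex.ext_iff]
lemma tr_I2_PX : (I2 * PX).trace = 0 := by
  norm_num [I2, PX, PY, PZ, Matrix.trace, Matrix.mul_apply, Fin.sum_univ_two,
    Matrix.one_apply, Complex.ext_iff]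
lemma tr_I2_PY : (I2 * PY).trace = 0 := by
  norm_num [I2, PX, PY, PZ, Matrix.trace, Matrix.mul_apply, Fin.sum_univ_two,
    Matrix.one_apply, Complex.ext_iff]
lemma tr_I2_PZ : (I2 * PZ).trace = 0 := by
  norm_num [I2, PX, PY, PZ, Matrix.trace, Matrix.mul_apply, Fin.sum_univ_two,
    Matrix.one_apply, Complex.ext_iff]
lemma tr_PX_I2 : (PX * I2).trace = 0 := by
  norm_num [I2, PX, PY, PZ, Matrix.trace, Matrix.mul_apply, Fin.sum_univ_two,
    Matrix.one_apply, Complex.ext_iff]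
lemma tr_PX_PX : (PX * PX).trace = 2 := by
  norm_num [I2, PX, PY, PZ, Matrix.trace, Matrix.mul_apply, Fin.sum_univ_two,
    Matrix.one_apply, Complex.ext_iff]
lemma tr_PX_PY : (PX * PY).trace = 0 := by
  norm_num [I2, PX, PY, PZ, Matrix.trace, Matrix.mul_apply, Fin.sum_univ_two,
    Matrix.one_apply, Complex.ext_iff]
lemma tr_PX_PZ : (PX * PZ).trace = 0 := by
  norm_num [I2, PX, PY, PZ, Matrix.trace, Matrix.mul_apply, Fin.sum_univ_two,
    Matrix.one_apply, Complex.ext_iff]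
lemma tr_PY_I2 : (PY * I2).trace = 0 := by
  norm_num [I2, PX, PY, PZ, Matrix.trace, Matrix.mul_apply, Fin.sum_univ_two,
    Matrix.one_apply, Complex.ext_iff]
lemma tr_PY_PX : (PY * PX).trace = 0 := by
  norm_num [I2, PX, PY, PZ, Matrix.trace, Matrix.mul_apply, Fin.sum_univ_two,
    Matrix.one_apply, Complex.ext_iff]
lemma tr_PY_PY : (PY * PY).trace = 2 := by
  norm_num [I2, PX, PY, PZ, Matrix.trace, Matrix.mul_apply, Fin.sum_univ_two,
    Matrix.one_apply, Complex.ext_iff]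
lemma tr_PY_PZ : (PY * PZ).trace = 0 := by
  norm_num [I2, PX, PY, PZ, Matrix.trace, Matrix.mul_apply, Fin.sum_univ_two,
    Matrix.one_apply, Complex.ext_iff]
lemma tr_PZ_I2 : (PZ * I2).trace = 0 := by
  norm_num [I2, PX, PY, PZ, Matrix.trace, Matrix.mul_apply, Fin.sum_univ_two,
    Matrix.one_apply, Complex.ext_iff]
lemma tr_PZ_PX : (PZ * PX).trace = 0 := by
  norm_num [I2, PX, PY, PZ, Matrix.trace, Matrix.mul_apply, Fin.sum_univ_two,
    Matrix.one_apply, Complex.ext_iff]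
lemma tr_PZ_PY : (PZ * PY).trace = 0 := by
  norm_num [I2, PX, PY, PZ, Matrix.trace, Matrix.mul_apply, Fin.sum_univ_two,
    Matrix.one_apply, Complex.ext_iff]
lemma tr_PZ_PZ : (PZ * PZ).trace = 2 := by
  norm_num [I2, PX, PY, PZ, Matrix.trace, Matrix.mul_apply, Fin.sum_univ_two,
    Matrix.one_apply, Complex.ext_iff]

set_option maxHeartbeats 3200000 in
theorem qrac32_trace_correlation (x₁ x₂ x₃ : Bool) :
    (Xp * rho32 x₁ x₂ x₃).trace = ((1 : ℂ)/(Real.sqrt 6 : ℂ)) * sgn x₁ ∧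
    (Yp * rho32 x₁ x₂ x₃).trace = ((1 : ℂ)/(Real.sqrt 6 : ℂ)) * sgn x₂ ∧
    (Zp * rho32 x₁ x₂ x₃).trace = ((1 : ℂ)/(Real.sqrt 6 : ℂ)) * sgn x₃ := by
  cases x₁ <;> cases x₂ <;> cases x₃ <;>
    refine ⟨?_, ?_, ?_⟩ <;>
  · simp only [Xp, Yp, Zp, rho32, sgn, Bool.xor, bne_self_eq_false, Bool.bne_false, Bool.bne_true,
      Bool.false_bne, Bool.true_bne, Bool.not_true, Bool.not_false, if_true, if_false,
      Bool.false_eq_true, Bool.true_eq_false, reduceIte,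
      Matrix.mul_add, Matrix.add_mul, Matrix.mul_sub, Matrix.sub_mul,
      Matrix.mul_smul, Matrix.smul_mul, ← Matrix.mul_kronecker_mul,
      Matrix.trace_add, Matrix.trace_sub, Matrix.trace_smul, Matrix.trace_kronecker,
      tr_I2_I2, tr_I2_PX, tr_I2_PY, tr_I2_PZ, tr_PX_I2, tr_PX_PX, tr_PX_PY, tr_PX_PZ,
      tr_PY_I2, tr_PY_PX, tr_PY_PY, tr_PY_PZ, tr_PZ_I2, tr_PZ_PX, tr_PZ_PY, tr_PZ_PZ,
      smul_eq_mul]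
    ring
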